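/- arXiv:2505.18844 — 6 statements merged into one kernel-verified Lean document; each statement's English description precedes it below -/
import Mathlib

section
/- Let E be a real inner product space, let x_1,…,x_n ∈ E be points that do not all lie on a single affine line, and let w_1,…,w_n be positive weights with w_1+⋯+w_n = 1. Then the function F(x) = ∑_{i=1}^n w_i ‖x − x_i‖ has at most one minimizer: if F(x*) ≤ F(x) for all x and F(y*) ≤ F(x) for all x, then x* = y*. -/
open scoped BigOperators

/-- In a real inner product space, if the data points
`x₁, …, xₙ` do not all lie on a single affine line, then the weighted
geometric-median objective `F(x) = ∑ wᵢ ‖x − xᵢ‖` has at most one minimizer. -/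
theorem geometric_median_unique_of_not_collinear
    {E : Type*} [NormedAddCommGroup E] [InnerProductSpace ℝ E]
    {n : ℕ} (x : Fin n → E) (w : Fin n → ℝ)
    (hw : ∀ i, 0 < w i) (hsum : ∑ i, w i = 1)
    (hnc : ¬ ∃ z v : E, ∀ i, ∃ t : ℝ, x i = z + t • v)
    (xstar ystar : E)
    (hx : ∀ z : E, ∑ i, w i * ‖xstar - x i‖ ≤ ∑ i, w i * ‖z - x i‖)
    (hy : ∀ z : E, ∑ i, w i * ‖ystar - x i‖ ≤ ∑ i, w i * ‖z - x i‖) :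
    xstar = ystar := by
  by_contra hne
  have hd : ystar - xstar ≠ 0 := sub_ne_zero.mpr (Ne.symm hne)
  have hxy : ∑ i, w i * ‖xstar - x i‖ = ∑ i, w i * ‖ystar - x i‖ :=
    le_antisymm (hx ystar) (hy xstar)
  set m : E := midpoint ℝ xstar ystar with hm
  have hmnorm : ∀ i, ‖m - x i‖ = ‖(xstar - x i) + (ystar - x i)‖ / 2 := by
    intro i
    have : m - x i = (2:ℝ)⁻¹ • ((xstar - x i) + (ystar - x i)) := by
      rw [hm, midpoint_eq_smul_add, invOf_eq_inv]; module
    rw [this, norm_smul]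
    simp [div_eq_inv_mul]
  -- each term achieves equality in the triangle inequality
  have hterm : ∀ i, ‖(xstar - x i) + (ystar - x i)‖ = ‖xstar - x i‖ + ‖ystar - x i‖ := by
    have hsum0 : ∑ i, w i * ((‖xstar - x i‖ + ‖ystar - x i‖) -
        ‖(xstar - x i) + (ystar - x i)‖) ≤ 0 := by
      have h1 : ∑ i, w i * ‖xstar - x i‖ ≤ ∑ i, w i * ‖m - x i‖ := hx m
      have h2 : ∑ i, w i * ‖m - x i‖
          = ∑ i, w i * (‖(xstar - x i) + (ystar - x i)‖ / 2) := by
        refine Finset.sum_congr rfl fun i _ => ?_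
        rw [hmnorm i]
      calc ∑ i, w i * ((‖xstar - x i‖ + ‖ystar - x i‖) -
            ‖(xstar - x i) + (ystar - x i)‖)
          = (∑ i, w i * ‖xstar - x i‖) + (∑ i, w i * ‖ystar - x i‖)
            - 2 * ∑ i, w i * (‖(xstar - x i) + (ystar - x i)‖ / 2) := by
            rw [← Finset.sum_add_distrib, Finset.mul_sum, ← Finset.sum_sub_distrib]
            refine Finset.sum_congr rfl fun i _ => ?_
            ring
        _ = 2 * (∑ i, w i * ‖xstar - x i‖) - 2 * ∑ i, w i * ‖m - x i‖ := by
            rw [← hxy, h2]; ring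
        _ ≤ 0 := by linarith
    have hnonneg : ∀ i ∈ Finset.univ, 0 ≤ w i * ((‖xstar - x i‖ + ‖ystar - x i‖) -
        ‖(xstar - x i) + (ystar - x i)‖) := by
      intro i _
      exact mul_nonneg (hw i).le (by linarith [norm_add_le (xstar - x i) (ystar - x i)])
    have hzero : ∀ i ∈ Finset.univ, w i * ((‖xstar - x i‖ + ‖ystar - x i‖) -
        ‖(xstar - x i) + (ystar - x i)‖) = 0 := by
      rw [← Finset.sum_eq_zero_iff_of_nonneg hnonneg]
      exact le_antisymm hsum0 (Finset.sum_nonneg hnonneg)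
    intro i
    have := hzero i (Finset.mem_univ i)
    have hw' := (hw i).ne'
    have : (‖xstar - x i‖ + ‖ystar - x i‖) - ‖(xstar - x i) + (ystar - x i)‖ = 0 := by
      rcases mul_eq_zero.mp this with h | h
      · exact absurd h hw'
      · exact h
    linarith
  -- hence same-ray, so every x i lies on the line through xstar and ystar
  apply hnc
  refine ⟨xstar, ystar - xstar, fun i => ?_⟩
  have hray : SameRay ℝ (xstar - x i) (ystar - x i) :=
    sameRay_iff_norm_add.mpr (hterm i)
  obtain ⟨c, a, b, ha, hb, -, hueq, hveq⟩ := hray.exists_eq_smul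
  have hdeq : ystar - xstar = (b - a) • c := by
    have h0 : ystar - xstar = (ystar - x i) - (xstar - x i) := by abel
    rw [h0, hueq, hveq, sub_smul]
  have hab : a - b ≠ 0 := by
    intro h
    apply hd
    rw [hdeq]
    have : b - a = 0 := by linarith [sub_eq_zero.mp h]
    rw [this, zero_smul]
  refine ⟨a / (a - b), ?_⟩
  have hx' : x i = xstar + (-a) • c := by
    rw [neg_smul, ← hueq]; abel
  have hcoef : a / (a - b) * (b - a) = -a := by
    field_simp
    ring
  rw [hx', hdeq, smul_smul, hcoef, neg_smul]
end

section
/- Let X be a metric space, let I ⊔ J be a partition of {1,…,n}, let w_1,…,w_n be positive weights summing to 1 with total contaminated weight W_I = ∑_{i∈I} w_i, let K be a nonempty subset of X containing z_j for all j ∈ J, and let z'_i ∈ X for i ∈ I be arbitrary. Define F'(z) = ∑_{j∈J} w_j d(z, z_j) + ∑_{i∈I} w_i d(z, z'_i). Then for every z ∈ X, F'(z) ≥ (1 − 2 W_I) · d(z, K) + ∑_{i∈I} w_i d(z'_i, K), where d(z, K) = inf_{k∈K} d(z, k). -/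
open scoped BigOperators

open Metric

/-! Each clean point lies in `K`, so it is at distance at least `d(p, K)` from `p`; each contaminated
point `z'ᵢ` satisfies `d(z'ᵢ, K) ≤ d(z'ᵢ, p) + d(p, K)` because `d(·, K)` is 1-Lipschitz. Summing
with the weights gives `(1 - W_I) d(p, K)` from the clean part and `∑ wᵢ d(z'ᵢ, K) - W_I d(p, K)`
from the contaminated part. -/

section

variable {ι X : Type*} [PseudoMetricSpace X] {s : Finset ι} {w : ι → ℝ} (K : Set X) (p : X)

theorem sum_mul_infDist_le_sum_mul_dist_of_mem (hw : ∀ i ∈ s, 0 ≤ w i) {y : ι → X}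
    (hy : ∀ i ∈ s, y i ∈ K) :
    (∑ i ∈ s, w i) * infDist p K ≤ ∑ i ∈ s, w i * dist p (y i) := by
  rw [Finset.sum_mul]
  exact Finset.sum_le_sum fun i hi =>
    mul_le_mul_of_nonneg_left (infDist_le_dist_of_mem (hy i hi)) (hw i hi)

theorem sum_mul_infDist_le_sum_mul_infDist_add_dist (hw : ∀ i ∈ s, 0 ≤ w i) (y : ι → X) :
    ∑ i ∈ s, w i * infDist (y i) K ≤
      (∑ i ∈ s, w i) * infDist p K + ∑ i ∈ s, w i * dist p (y i) := by
  rw [Finset.sum_mul, ← Finset.sum_add_distrib]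
  refine Finset.sum_le_sum fun i hi => ?_
  rw [← mul_add, dist_comm]
  exact mul_le_mul_of_nonneg_left infDist_le_infDist_add_dist (hw i hi)

end

theorem contaminated_objective_lower_bound_general
    {X : Type*} [MetricSpace X]
    {n : ℕ} (I J : Finset (Fin n))
    (hdisj : Disjoint I J) (hcover : I ∪ J = Finset.univ)
    (w : Fin n → ℝ) (hw : ∀ i, 0 < w i) (hsum : ∑ i, w i = 1)
    (K : Set X)
    (z : Fin n → X) (hz : ∀ j ∈ J, z j ∈ K)
    (z' : Fin n → X) :
    ∀ p : X,
      (1 - 2 * ∑ i ∈ I, w i) * Metric.infDist p K +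
          ∑ i ∈ I, w i * Metric.infDist (z' i) K ≤
        (∑ j ∈ J, w j * dist p (z j)) + ∑ i ∈ I, w i * dist p (z' i) := by
  intro p
  have hclean_weight : ∑ j ∈ J, w j = 1 - ∑ i ∈ I, w i := by
    rw [← hsum, ← hcover, Finset.sum_union hdisj]
    ring
  have hclean := sum_mul_infDist_le_sum_mul_dist_of_mem K p (fun j _ => (hw j).le) hz
  have hcontaminated :=
    sum_mul_infDist_le_sum_mul_infDist_add_dist (s := I) K p (fun i _ => (hw i).le) z'
  rw [hclean_weight] at hclean
  linarith

/-- Lower bound on the contaminated objective. With clean points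
`z j ∈ K` for `j ∈ J` and arbitrary contaminated points `z' i` for `i ∈ I`,
`F'(p) ≥ (1 − 2 W_I) d(p,K) + ∑_{i∈I} wᵢ d(z'ᵢ, K)` for every `p`. -/
theorem contaminated_objective_lower_bound
    {X : Type*} [MetricSpace X]
    {n : ℕ} (I J : Finset (Fin n))
    (hdisj : Disjoint I J) (hcover : I ∪ J = Finset.univ)
    (w : Fin n → ℝ) (hw : ∀ i, 0 < w i) (hsum : ∑ i, w i = 1)
    (K : Set X) (hK : K.Nonempty)
    (z : Fin n → X) (hz : ∀ j ∈ J, z j ∈ K)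
    (z' : Fin n → X) :
    ∀ p : X,
      (1 - 2 * ∑ i ∈ I, w i) * Metric.infDist p K +
          ∑ i ∈ I, w i * Metric.infDist (z' i) K ≤
        (∑ j ∈ J, w j * dist p (z j)) + ∑ i ∈ I, w i * dist p (z' i) :=
  contaminated_objective_lower_bound_general I J hdisj hcover w hw hsum K z hz z'
end

section
/- Let X be a metric space, let I ⊔ J be a partition of {1,…,n}, let w_1,…,w_n be positive weights summing to 1 with W_I = ∑_{i∈I} w_i < 1/2, let K be a nonempty bounded subset of X containing z_j for all j ∈ J, and let z'_i ∈ X for i ∈ I be arbitrary. Define F'(z) = ∑_{j∈J} w_j d(z, z_j) + ∑_{i∈I} w_i d(z, z'_i). Then every minimizer z̄ of F' (i.e., F'(z̄) ≤ F'(z) for all z ∈ X) satisfies d(z̄, K) ≤ diam(K) / (1 − 2 W_I). -/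
/-!
Let `y ∈ K`. At the minimizer `z̄` every clean term is at least `d(z̄, K)`, while at `y` every
clean term is at most `diam K`; moving from `y` to `z̄` changes each contaminated term by at most
`d(z̄, y)`. Comparing `F'(z̄) ≤ F'(y)` therefore gives
`W_J d(z̄, K) ≤ W_J diam K + W_I d(z̄, y)`, and taking the infimum over `y ∈ K` leaves
`(W_J - W_I) d(z̄, K) ≤ W_J diam K` with `W_J - W_I = 1 - 2 W_I`.
-/

namespace Metric

variable {X : Type*} [PseudoMetricSpace X]

theorem le_mul_infDist {s : Set X} {x : X} {a c : ℝ} (ha : 0 ≤ a) (hs : s.Nonempty)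
    (h : ∀ y ∈ s, c ≤ a * dist x y) : c ≤ a * infDist x s := by
  rcases ha.eq_or_lt with rfl | ha
  · obtain ⟨y, hy⟩ := hs
    simpa using h y hy
  · rw [← div_le_iff₀' ha, le_infDist hs]
    exact fun y hy => (div_le_iff₀' ha).2 (h y hy)

end Metric

open Metric

section WeightedDistSum

variable {X ι : Type*} [PseudoMetricSpace X]

noncomputable def weightedDistSum (s : Finset ι) (w : ι → ℝ) (x : ι → X) (p : X) : ℝ :=
  ∑ i ∈ s, w i * dist p (x i)

variable {s : Finset ι} {w : ι → ℝ} {x : ι → X}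

theorem le_weightedDistSum {p : X} {r : ℝ} (hw : ∀ i ∈ s, 0 ≤ w i)
    (h : ∀ i ∈ s, r ≤ dist p (x i)) : (∑ i ∈ s, w i) * r ≤ weightedDistSum s w x p := by
  rw [Finset.sum_mul]
  exact Finset.sum_le_sum fun i hi => mul_le_mul_of_nonneg_left (h i hi) (hw i hi)

theorem weightedDistSum_le {p : X} {r : ℝ} (hw : ∀ i ∈ s, 0 ≤ w i)
    (h : ∀ i ∈ s, dist p (x i) ≤ r) : weightedDistSum s w x p ≤ (∑ i ∈ s, w i) * r := by
  rw [Finset.sum_mul]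
  exact Finset.sum_le_sum fun i hi => mul_le_mul_of_nonneg_left (h i hi) (hw i hi)

theorem weightedDistSum_le_add_mul_dist (hw : ∀ i ∈ s, 0 ≤ w i) (p q : X) :
    weightedDistSum s w x q ≤ weightedDistSum s w x p + (∑ i ∈ s, w i) * dist p q := by
  rw [weightedDistSum, weightedDistSum, Finset.sum_mul, ← Finset.sum_add_distrib]
  refine Finset.sum_le_sum fun i hi => ?_
  rw [← mul_add]
  exact mul_le_mul_of_nonneg_left ((dist_triangle_left q (x i) p).trans_eq (add_comm _ _))
    (hw i hi)

theorem sub_mul_infDist_le_of_isMinOn (I J : Finset ι) (hw : ∀ i, 0 ≤ w i)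
    {K : Set X} (hK : K.Nonempty) (hKb : Bornology.IsBounded K)
    {z z' : ι → X} (hz : ∀ j ∈ J, z j ∈ K) {zbar : X}
    (hmin : IsMinOn (fun p => weightedDistSum J w z p + weightedDistSum I w z' p) Set.univ zbar) :
    (∑ j ∈ J, w j - ∑ i ∈ I, w i) * infDist zbar K ≤ (∑ j ∈ J, w j) * diam K := by
  set WI := ∑ i ∈ I, w i
  set WJ := ∑ j ∈ J, w j
  have hcompare : ∀ y ∈ K, WJ * infDist zbar K - WJ * diam K ≤ WI * dist zbar y := by
    intro y hy
    have hchain := calc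
      WJ * infDist zbar K + weightedDistSum I w z' zbar
          ≤ weightedDistSum J w z zbar + weightedDistSum I w z' zbar := by
        gcongr
        exact le_weightedDistSum (fun j _ => hw j) fun j hj => infDist_le_dist_of_mem (hz j hj)
      _ ≤ weightedDistSum J w z y + weightedDistSum I w z' y := hmin (Set.mem_univ y)
      _ ≤ WJ * diam K + (weightedDistSum I w z' zbar + WI * dist zbar y) := by
        gcongr
        · exact weightedDistSum_le (fun j _ => hw j) fun j hj =>
            dist_le_diam_of_mem hKb hy (hz j hj)
        · exact weightedDistSum_le_add_mul_dist (fun i _ => hw i) zbar y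
    linarith
  have := le_mul_infDist (Finset.sum_nonneg fun i _ => hw i) hK hcompare
  linarith

end WeightedDistSum

/-- Breakdown, case `W_I < 1/2`. If the contaminated weight is
less than `1/2` and `K` is a nonempty bounded set containing the clean points,
then every minimizer `z̄` of the contaminated objective satisfies
`d(z̄, K) ≤ diam(K) / (1 − 2 W_I)`. -/
theorem median_bounded_of_contamination_lt_half
    {X : Type*} [MetricSpace X]
    {n : ℕ} (I J : Finset (Fin n))
    (hdisj : Disjoint I J) (hcover : I ∪ J = Finset.univ)
    (w : Fin n → ℝ) (hw : ∀ i, 0 < w i) (hsum : ∑ i, w i = 1)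
    (hWI : ∑ i ∈ I, w i < 1 / 2)
    (K : Set X) (hK : K.Nonempty) (hKb : Bornology.IsBounded K)
    (z : Fin n → X) (hz : ∀ j ∈ J, z j ∈ K)
    (z' : Fin n → X)
    (zbar : X)
    (hmin : ∀ p : X,
      (∑ j ∈ J, w j * dist zbar (z j)) + ∑ i ∈ I, w i * dist zbar (z' i) ≤
        (∑ j ∈ J, w j * dist p (z j)) + ∑ i ∈ I, w i * dist p (z' i)) :
    Metric.infDist zbar K ≤ Metric.diam K / (1 - 2 * ∑ i ∈ I, w i) := by
  have hw₀ : ∀ i, 0 ≤ w i := fun i => (hw i).le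
  have hWJ : ∑ j ∈ J, w j = 1 - ∑ i ∈ I, w i := by
    rw [← hsum, ← hcover, Finset.sum_union hdisj]
    ring
  have hbound := sub_mul_infDist_le_of_isMinOn I J hw₀ hK hKb hz fun p _ => hmin p
  rw [hWJ] at hbound
  have hWI₀ : 0 ≤ ∑ i ∈ I, w i := Finset.sum_nonneg fun i _ => hw₀ i
  rw [le_div_iff₀ (by linarith)]
  nlinarith [diam_nonneg (s := K)]
end

section
/- Let X be a metric space, let I ⊔ J be a partition of {1,…,n}, let w_1,…,w_n be positive weights summing to 1 with W_I = ∑_{i∈I} w_i > 1/2, let K be a nonempty bounded subset of X containing z_j for all j ∈ J, and suppose all contaminated points are equal to a single point z' ∈ X. Define F'(z) = ∑_{j∈J} w_j d(z, z_j) + W_I · d(z, z'). Then every minimizer z̄ of F' satisfies d(z̄, K) ≥ d(z', K) − ((1 − W_I)/(2 W_I − 1)) · diam(K). In particular, if contaminations are chosen with d(z', K) → ∞, then d(z̄, K) → ∞. -/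
open scoped BigOperators

/-! A point carrying more than half of the total weight is the unique minimizer of the weighted
sum of distances: moving away from it by `δ` raises its term by more than `δ / 2`, while the
triangle inequality lets the remaining terms fall by less than `δ / 2`. So every minimizer `z̄`
of `F'` equals `z'`, and the claimed bound holds because the subtracted term is nonnegative. -/

section WeightedDistSum

variable {X ι : Type*} [MetricSpace X] (s : Finset ι) {c : ι → ℝ} (y : ι → X)

theorem weighted_dist_sum_le_add (hc : ∀ i ∈ s, 0 ≤ c i) (p x : X) :
    ∑ i ∈ s, c i * dist p (y i) ≤
      ∑ i ∈ s, c i * dist x (y i) + (∑ i ∈ s, c i) * dist x p := by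
  rw [Finset.sum_mul, ← Finset.sum_add_distrib]
  refine Finset.sum_le_sum fun i hi => ?_
  calc c i * dist p (y i) ≤ c i * (dist x (y i) + dist x p) := by
        gcongr
        · exact hc i hi
        · rw [add_comm]; exact dist_triangle_left p (y i) x
    _ = c i * dist x (y i) + c i * dist x p := mul_add _ _ _

theorem eq_of_weighted_dist_sum_le_of_sum_lt (hc : ∀ i ∈ s, 0 ≤ c i) {W : ℝ}
    (hW : ∑ i ∈ s, c i < W) {p x : X}
    (hx : ∑ i ∈ s, c i * dist x (y i) + W * dist x p ≤ ∑ i ∈ s, c i * dist p (y i)) :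
    x = p := by
  have hle := weighted_dist_sum_le_add s y hc p x
  have hdist : (W - ∑ i ∈ s, c i) * dist x p ≤ 0 := by linarith
  exact dist_le_zero.mp (nonpos_of_mul_nonpos_right hdist (sub_pos.mpr hW))

end WeightedDistSum

theorem median_unbounded_of_contamination_gt_half_general
    {X : Type*} [MetricSpace X]
    {n : ℕ} (I J : Finset (Fin n))
    (hdisj : Disjoint I J) (hcover : I ∪ J = Finset.univ)
    (w : Fin n → ℝ) (hw : ∀ i, 0 < w i) (hsum : ∑ i, w i = 1)
    (hWI : 1 / 2 < ∑ i ∈ I, w i)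
    (K : Set X)
    (z : Fin n → X)
    (z' : X)
    (zbar : X)
    (hmin : ∀ p : X,
      (∑ j ∈ J, w j * dist zbar (z j)) + (∑ i ∈ I, w i) * dist zbar z' ≤
        (∑ j ∈ J, w j * dist p (z j)) + (∑ i ∈ I, w i) * dist p z') :
    Metric.infDist z' K -
        ((1 - ∑ i ∈ I, w i) / (2 * (∑ i ∈ I, w i) - 1)) * Metric.diam K ≤
      Metric.infDist zbar K := by
  set W := ∑ i ∈ I, w i
  have hwJ : ∀ j ∈ J, 0 ≤ w j := fun j _ => (hw j).le
  have hJ : ∑ j ∈ J, w j = 1 - W := by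
    rw [← hsum, ← hcover, Finset.sum_union hdisj]
    ring
  have hzbar : zbar = z' := by
    refine eq_of_weighted_dist_sum_le_of_sum_lt J z hwJ (W := W) (by linarith) ?_
    simpa using hmin z'
  have hslack : 0 ≤ (1 - W) / (2 * W - 1) * Metric.diam K :=
    mul_nonneg (div_nonneg (hJ ▸ Finset.sum_nonneg hwJ) (by linarith)) Metric.diam_nonneg
  rw [hzbar]
  linarith

/-- Breakdown, case `W_I > 1/2`. If the contaminated weight
exceeds `1/2` and all contaminated points equal a single point `z'`, then every
minimizer `z̄` of the contaminated objective satisfies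
`d(z̄, K) ≥ d(z', K) − ((1 − W_I)/(2 W_I − 1)) · diam(K)`; in particular, the
median diverges as `d(z', K) → ∞`. -/
theorem median_unbounded_of_contamination_gt_half
    {X : Type*} [MetricSpace X]
    {n : ℕ} (I J : Finset (Fin n))
    (hdisj : Disjoint I J) (hcover : I ∪ J = Finset.univ)
    (w : Fin n → ℝ) (hw : ∀ i, 0 < w i) (hsum : ∑ i, w i = 1)
    (hWI : 1 / 2 < ∑ i ∈ I, w i)
    (K : Set X) (hK : K.Nonempty) (hKb : Bornology.IsBounded K)
    (z : Fin n → X) (hz : ∀ j ∈ J, z j ∈ K)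
    (z' : X)
    (zbar : X)
    (hmin : ∀ p : X,
      (∑ j ∈ J, w j * dist zbar (z j)) + (∑ i ∈ I, w i) * dist zbar z' ≤
        (∑ j ∈ J, w j * dist p (z j)) + (∑ i ∈ I, w i) * dist p z') :
    Metric.infDist z' K -
        ((1 - ∑ i ∈ I, w i) / (2 * (∑ i ∈ I, w i) - 1)) * Metric.diam K ≤
      Metric.infDist zbar K :=
  median_unbounded_of_contamination_gt_half_general I J hdisj hcover w hw hsum hWI K z z' zbar hmin
end

section
/- Let X be a metric space, let I ⊔ J be a partition of {1,…,n}, let w_1,…,w_n be positive weights summing to 1 with W_I = ∑_{i∈I} w_i = 1/2, let K be a nonempty bounded subset of X containing z_j for all j ∈ J, and suppose all contaminated points are equal to a single point z' ∈ X. Define F'(z) = ∑_{j∈J} w_j d(z, z_j) + (1/2) · d(z, z'). Then (1/2) d(z', K) ≤ inf_{z∈X} F'(z) and F'(z') ≤ (1/2) d(z', K) + (1/2) diam(K); consequently F'(z') ≤ inf_{z∈X} F'(z) + (1/2) diam(K), so z' is a near-minimizer whose distance to K can be made arbitrarily large. -/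
/-!
Every clean point lies in `K`, so by the triangle inequality through any `p` the clean half of
the weight pays at least `d(z', K) - d(p, z')` at `p`, while the contaminated half pays exactly
`d(p, z')`: hence `F' ≥ (1/2) d(z', K)` everywhere. At `z'` itself only the clean half pays, and
each clean point is within `d(z', K) + diam K` of `z'`.
-/

open Metric

section WeightedDistances

variable {X ι : Type*} [PseudoMetricSpace X] {s : Finset ι} {w : ι → ℝ} {K : Set X}
  {z : ι → X}

theorem Metric.infDist_le_dist_add_dist_of_mem {x y : X} (hy : y ∈ K) (p : X) :
    infDist x K ≤ dist p y + dist p x :=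
  (infDist_le_dist_of_mem hy).trans ((dist_triangle_left x y p).trans_eq (add_comm _ _))

theorem Finset.sum_mul_infDist_le (hw : ∀ j ∈ s, 0 ≤ w j) (hz : ∀ j ∈ s, z j ∈ K) (x p : X) :
    (∑ j ∈ s, w j) * infDist x K ≤
      ∑ j ∈ s, w j * dist p (z j) + (∑ j ∈ s, w j) * dist p x := by
  rw [Finset.sum_mul, Finset.sum_mul, ← Finset.sum_add_distrib]
  refine Finset.sum_le_sum fun j hj => ?_
  rw [← mul_add]
  exact mul_le_mul_of_nonneg_left (infDist_le_dist_add_dist_of_mem (hz j hj) p) (hw j hj)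

theorem Finset.sum_mul_dist_le_of_isBounded (hKb : Bornology.IsBounded K)
    (hw : ∀ j ∈ s, 0 ≤ w j) (hz : ∀ j ∈ s, z j ∈ K) (x : X) :
    ∑ j ∈ s, w j * dist x (z j) ≤ (∑ j ∈ s, w j) * (infDist x K + diam K) := by
  rw [Finset.sum_mul]
  exact Finset.sum_le_sum fun j hj =>
    mul_le_mul_of_nonneg_left (dist_le_infDist_add_diam hKb (hz j hj)) (hw j hj)

end WeightedDistances

theorem median_near_minimizer_of_contamination_eq_half_general
    {X : Type*} [MetricSpace X]
    {n : ℕ} (I J : Finset (Fin n))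
    (hdisj : Disjoint I J) (hcover : I ∪ J = Finset.univ)
    (w : Fin n → ℝ) (hw : ∀ i, 0 < w i) (hsum : ∑ i, w i = 1)
    (hWI : ∑ i ∈ I, w i = 1 / 2)
    (K : Set X) (hKb : Bornology.IsBounded K)
    (z : Fin n → X) (hz : ∀ j ∈ J, z j ∈ K)
    (z' : X) :
    (1 / 2) * Metric.infDist z' K ≤
        (⨅ p : X, (∑ j ∈ J, w j * dist p (z j)) + (1 / 2) * dist p z') ∧
      (∑ j ∈ J, w j * dist z' (z j)) + (1 / 2) * dist z' z' ≤
        (1 / 2) * Metric.infDist z' K + (1 / 2) * Metric.diam K ∧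
      (∑ j ∈ J, w j * dist z' (z j)) + (1 / 2) * dist z' z' ≤
        (⨅ p : X, (∑ j ∈ J, w j * dist p (z j)) + (1 / 2) * dist p z') +
          (1 / 2) * Metric.diam K := by
  have hwJ : ∀ j ∈ J, 0 ≤ w j := fun j _ => (hw j).le
  have hWJ : ∑ j ∈ J, w j = 1 / 2 := by
    have h := Finset.sum_union hdisj (f := w)
    rw [hcover, hsum, hWI] at h
    linarith
  have : Nonempty X := ⟨z'⟩
  have lower : (1 / 2) * infDist z' K ≤
      ⨅ p : X, (∑ j ∈ J, w j * dist p (z j)) + (1 / 2) * dist p z' :=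
    le_ciInf fun p => hWJ ▸ Finset.sum_mul_infDist_le hwJ hz z' p
  have upper : (∑ j ∈ J, w j * dist z' (z j)) + (1 / 2) * dist z' z' ≤
      (1 / 2) * infDist z' K + (1 / 2) * diam K := by
    rw [dist_self, mul_zero, add_zero, ← mul_add, ← hWJ]
    exact Finset.sum_mul_dist_le_of_isBounded hKb hwJ hz z'
  exact ⟨lower, upper, upper.trans (by linarith)⟩

/-- Breakdown, boundary case `W_I = 1/2`. If the contaminated
weight is exactly `1/2` and all contaminated points equal a single point `z'`,
then `(1/2) d(z',K) ≤ inf_z F'(z)`, `F'(z') ≤ (1/2) d(z',K) + (1/2) diam(K)`,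
and consequently `F'(z') ≤ inf_z F'(z) + (1/2) diam(K)`: `z'` is a
near-minimizer whose distance to `K` can be arbitrarily large. -/
theorem median_near_minimizer_of_contamination_eq_half
    {X : Type*} [MetricSpace X]
    {n : ℕ} (I J : Finset (Fin n))
    (hdisj : Disjoint I J) (hcover : I ∪ J = Finset.univ)
    (w : Fin n → ℝ) (hw : ∀ i, 0 < w i) (hsum : ∑ i, w i = 1)
    (hWI : ∑ i ∈ I, w i = 1 / 2)
    (K : Set X) (hK : K.Nonempty) (hKb : Bornology.IsBounded K)
    (z : Fin n → X) (hz : ∀ j ∈ J, z j ∈ K)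
    (z' : X) :
    (1 / 2) * Metric.infDist z' K ≤
        (⨅ p : X, (∑ j ∈ J, w j * dist p (z j)) + (1 / 2) * dist p z') ∧
      (∑ j ∈ J, w j * dist z' (z j)) + (1 / 2) * dist z' z' ≤
        (1 / 2) * Metric.infDist z' K + (1 / 2) * Metric.diam K ∧
      (∑ j ∈ J, w j * dist z' (z j)) + (1 / 2) * dist z' z' ≤
        (⨅ p : X, (∑ j ∈ J, w j * dist p (z j)) + (1 / 2) * dist p z') +
          (1 / 2) * Metric.diam K :=
  median_near_minimizer_of_contamination_eq_half_general I J hdisj hcover w hw hsum hWI K hKb z hz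
    z'
end

section
/- Let H be a real inner product space, let f : H → ℝ be convex, let x* ∈ H be a minimizer of f, and let G > 0, η₀ > 0, D ≥ 0 with ‖x_0 − x*‖ ≤ D. Suppose iterates are generated by x_{k+1} = x_k − η_k g_k with step sizes η_k = η₀/√(k+1), where each g_k is a subgradient of f at x_k (i.e., f(y) ≥ f(x_k) + ⟨g_k, y − x_k⟩ for all y ∈ H) with ‖g_k‖ ≤ G. Then for every k ≥ 0, min_{0 ≤ j ≤ k} f(x_j) − f(x*) ≤ (D² + η₀² G² (1 + log(k+1))) / (2 η₀ √(k+1)). -/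
open scoped RealInnerProductSpace

lemma harmonic_le_aux (k : ℕ) :
    ∑ j ∈ Finset.range (k + 1), (1 : ℝ) / (j + 1) ≤ 1 + Real.log (k + 1) := by
  induction k with
  | zero => simp
  | succ k ih =>
    rw [Finset.sum_range_succ]
    have h1 : (0:ℝ) < (k:ℝ) + 1 := by positivity
    have h2 : (0:ℝ) < (k:ℝ) + 2 := by positivity
    have hlog : Real.log (((k:ℝ)+1)/((k:ℝ)+2)) ≤ ((k:ℝ)+1)/((k:ℝ)+2) - 1 :=
      Real.log_le_sub_one_of_pos (by positivity)
    rw [Real.log_div (by positivity) (by positivity)] at hlog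
    have heq : ((k:ℝ)+1)/((k:ℝ)+2) - 1 = -(1/((k:ℝ)+2)) := by field_simp; norm_num
    rw [heq] at hlog
    push_cast
    push_cast at ih
    have h3 : ((k:ℝ)+1+1) = (k:ℝ)+2 := by ring
    rw [h3]
    linarith

lemma sqrt_sum_ge_aux (k : ℕ) :
    Real.sqrt ((k:ℝ) + 1) ≤ ∑ j ∈ Finset.range (k + 1), 1 / Real.sqrt ((j:ℝ) + 1) := by
  induction k with
  | zero => simp
  | succ k ih =>
    rw [Finset.sum_range_succ]
    have h2 : (0:ℝ) < Real.sqrt ((k:ℝ)+2) := Real.sqrt_pos.mpr (by positivity)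
    have hm : ((k:ℝ)+1) ≤ Real.sqrt ((k:ℝ)+1) * Real.sqrt ((k:ℝ)+2) := by
      nlinarith [Real.sq_sqrt (show (0:ℝ) ≤ (k:ℝ)+1 by positivity),
        Real.sq_sqrt (show (0:ℝ) ≤ (k:ℝ)+2 by positivity),
        Real.sqrt_nonneg ((k:ℝ)+1), Real.sqrt_nonneg ((k:ℝ)+2),
        Real.sqrt_le_sqrt (show ((k:ℝ)+1) ≤ (k:ℝ)+2 by linarith)]
    have hsq : Real.sqrt ((k:ℝ)+2) * Real.sqrt ((k:ℝ)+2) = (k:ℝ)+2 :=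
      Real.mul_self_sqrt (by positivity)
    have key : Real.sqrt ((k:ℝ)+2) - Real.sqrt ((k:ℝ)+1) ≤ 1 / Real.sqrt ((k:ℝ)+2) := by
      rw [le_div_iff₀ h2]
      nlinarith
    push_cast
    push_cast at ih
    have : Real.sqrt ((k:ℝ)+1+1) = Real.sqrt ((k:ℝ)+2) := by congr 1; ring
    rw [this]
    linarith

/-- Convergence bound for the subgradient method with step sizes
`η_k = η₀/√(k+1)`: for every `k`,
`min_{0 ≤ j ≤ k} f(x_j) − f(x*) ≤ (D² + η₀²G²(1 + log(k+1))) / (2η₀√(k+1))`. -/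
theorem subgradient_method_sublinear_convergence
    {H : Type*} [NormedAddCommGroup H] [InnerProductSpace ℝ H]
    (f : H → ℝ) (hconv : ConvexOn ℝ Set.univ f)
    (xstar : H) (hmin : ∀ z : H, f xstar ≤ f z)
    (G η₀ D : ℝ) (hG : 0 < G) (hη : 0 < η₀) (hD : 0 ≤ D)
    (x g : ℕ → H)
    (hx0 : ‖x 0 - xstar‖ ≤ D)
    (hupd : ∀ k : ℕ, x (k + 1) = x k - (η₀ / Real.sqrt (k + 1)) • g k)
    (hsub : ∀ (k : ℕ) (z : H), f (x k) + ⟪g k, z - x k⟫ ≤ f z)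
    (hgb : ∀ k : ℕ, ‖g k‖ ≤ G) :
    ∀ k : ℕ,
      (Finset.range (k + 1)).inf' (Finset.nonempty_range_iff.mpr k.succ_ne_zero)
          (fun j => f (x j)) - f xstar ≤
        (D ^ 2 + η₀ ^ 2 * G ^ 2 * (1 + Real.log (k + 1))) /
          (2 * η₀ * Real.sqrt (k + 1)) := by
  intro k
  set η : ℕ → ℝ := fun j => η₀ / Real.sqrt ((j:ℝ) + 1) with hηdef
  set e : ℕ → ℝ := fun j => f (x j) - f xstar with hedef
  have hsqrtpos : ∀ j : ℕ, (0:ℝ) < Real.sqrt ((j:ℝ) + 1) := fun j =>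
    Real.sqrt_pos.mpr (by positivity)
  have hηpos : ∀ j : ℕ, 0 < η j := fun j => div_pos hη (hsqrtpos j)
  have henonneg : ∀ j : ℕ, 0 ≤ e j := fun j => sub_nonneg.mpr (hmin (x j))
  -- per-step inequality
  have step : ∀ j : ℕ, ‖x (j+1) - xstar‖^2 ≤
      ‖x j - xstar‖^2 - 2 * η j * e j + (η j)^2 * G^2 := by
    intro j
    have hupd' : x (j+1) - xstar = (x j - xstar) - (η j) • g j := by
      rw [hupd j]; abel
    rw [hupd', norm_sub_sq_real]
    have hinner : e j ≤ ⟪g j, x j - xstar⟫ := by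
      have := hsub j xstar
      have h2 : ⟪g j, xstar - x j⟫ = -⟪g j, x j - xstar⟫ := by
        rw [← inner_neg_right]; congr 1; abel
      rw [h2] at this
      simp only [hedef]; linarith
    have hip : ⟪x j - xstar, (η j) • g j⟫ = η j * ⟪g j, x j - xstar⟫ := by
      rw [real_inner_smul_right, real_inner_comm]
    rw [hip]
    have hns : ‖(η j) • g j‖^2 ≤ (η j)^2 * G^2 := by
      rw [norm_smul]
      have hgn : 0 ≤ ‖g j‖ := norm_nonneg _
      have : ‖η j‖ = η j := abs_of_pos (hηpos j)
      rw [mul_pow, this]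
      exact mul_le_mul_of_nonneg_left (pow_le_pow_left₀ hgn (hgb j) 2) (sq_nonneg _)
    have h1 : 2 * η j * e j ≤ 2 * (η j * ⟪g j, x j - xstar⟫) := by
      have := (hηpos j).le
      nlinarith [hinner, hηpos j]
    linarith
  -- telescoped inequality
  have tele : ∀ n : ℕ, ‖x n - xstar‖^2 + ∑ j ∈ Finset.range n, 2 * η j * e j ≤
      ‖x 0 - xstar‖^2 + ∑ j ∈ Finset.range n, (η j)^2 * G^2 := by
    intro n
    induction n with
    | zero => simp
    | succ n ih =>
      rw [Finset.sum_range_succ, Finset.sum_range_succ]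
      have := step n
      linarith
  have hsum : ∑ j ∈ Finset.range (k+1), 2 * η j * e j ≤
      D^2 + ∑ j ∈ Finset.range (k+1), (η j)^2 * G^2 := by
    have := tele (k+1)
    have h1 : ‖x 0 - xstar‖^2 ≤ D^2 := by
      have := norm_nonneg (x 0 - xstar); nlinarith
    have h2 : (0:ℝ) ≤ ‖x (k+1) - xstar‖^2 := sq_nonneg _
    linarith
  -- bound sum of squared step sizes
  have hsq : ∑ j ∈ Finset.range (k+1), (η j)^2 * G^2 ≤
      η₀^2 * G^2 * (1 + Real.log ((k:ℝ)+1)) := by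
    have heach : ∀ j : ℕ, (η j)^2 = η₀^2 * (1/((j:ℝ)+1)) := by
      intro j
      simp only [hηdef, div_pow]
      rw [Real.sq_sqrt (by positivity : (0:ℝ) ≤ (j:ℝ)+1)]
      ring
    calc ∑ j ∈ Finset.range (k+1), (η j)^2 * G^2
        = η₀^2 * G^2 * ∑ j ∈ Finset.range (k+1), (1:ℝ)/((j:ℝ)+1) := by
          rw [Finset.mul_sum]; exact Finset.sum_congr rfl fun j _ => by rw [heach j]; ring
      _ ≤ η₀^2 * G^2 * (1 + Real.log ((k:ℝ)+1)) := by
          have := harmonic_le_aux k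
          have hc : (0:ℝ) ≤ η₀^2 * G^2 := by positivity
          exact mul_le_mul_of_nonneg_left this hc
  -- the min value
  set m : ℝ := (Finset.range (k + 1)).inf' (Finset.nonempty_range_iff.mpr k.succ_ne_zero)
      (fun j => f (x j)) - f xstar with hmdef
  have hmle : ∀ j ∈ Finset.range (k+1), m ≤ e j := by
    intro j hj
    have := Finset.inf'_le (fun j => f (x j)) hj
    simp only [hmdef, hedef]; linarith
  have hmnn : 0 ≤ m := by
    obtain ⟨j, hj, hje⟩ := Finset.exists_mem_eq_inf' (Finset.nonempty_range_iff.mpr k.succ_ne_zero)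
      (fun j => f (x j))
    rw [hmdef, hje]
    exact sub_nonneg.mpr (hmin (x j))
  -- lower bound on sum
  have hlb : 2 * m * (η₀ * Real.sqrt ((k:ℝ)+1)) ≤ ∑ j ∈ Finset.range (k+1), 2 * η j * e j := by
    have h1 : ∑ j ∈ Finset.range (k+1), 2 * η j * m ≤ ∑ j ∈ Finset.range (k+1), 2 * η j * e j := by
      apply Finset.sum_le_sum
      intro j hj
      have := hηpos j
      nlinarith [hmle j hj]
    have h2 : ∑ j ∈ Finset.range (k+1), 2 * η j * m = 2 * m * ∑ j ∈ Finset.range (k+1), η j := by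
      rw [Finset.mul_sum]; exact Finset.sum_congr rfl fun j _ => by ring
    have h3 : η₀ * Real.sqrt ((k:ℝ)+1) ≤ ∑ j ∈ Finset.range (k+1), η j := by
      have := sqrt_sum_ge_aux k
      calc η₀ * Real.sqrt ((k:ℝ)+1) ≤ η₀ * ∑ j ∈ Finset.range (k+1), 1 / Real.sqrt ((j:ℝ)+1) :=
            mul_le_mul_of_nonneg_left this hη.le
        _ = ∑ j ∈ Finset.range (k+1), η j := by
            rw [Finset.mul_sum]
            exact Finset.sum_congr rfl fun j _ => by simp only [hηdef]; ring
    nlinarith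
  -- conclude
  have hdenpos : 0 < 2 * η₀ * Real.sqrt ((k:ℝ)+1) := by positivity
  rw [le_div_iff₀ hdenpos]
  nlinarith
end
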